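/- arXiv:1811.07049 — 3 statements merged into one kernel-verified Lean document; each statement's English description precedes it below -/
import Mathlib

section
/- Let M(x,ẋ) = J(x)ᵀ N(y(x), J(x)ẋ) J(x), where y : ℝ^m → ℝ^n is differentiable with Jacobian J(x) = ∂_x y(x) and N : ℝ^n × ℝ^n → ℝ^{n×n} is differentiable. Define Ξ_M(x,ẋ) = (1/2) Σ_{i=1}^m ẋ_i ∂_{ẋ} m_i(x,ẋ), where m_i is the i-th column of M, and similarly Ξ_N(y,ẏ) = (1/2) Σ_{j=1}^n ẏ_j ∂_{ẏ} n_j(y,ẏ). Then Ξ_M(x,ẋ) = J(x)ᵀ Ξ_N(y(x), J(x)ẋ) J(x). -/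
/-! Contracting `Ξ_M(x, ẋ)` with a vector `u` gives `½ (D_u M)(x, ẋ) ẋ`, where `D_u` is the
directional derivative in the velocity variable. Since `J(x)` does not depend on `ẋ`, the chain rule
gives `D_u M = Jᵀ (D_{J u} N) J`, and contracting back yields `Jᵀ Ξ_N(y, J ẋ) J u`. -/

open Matrix

/-- Partial derivative of a scalar function on `ℝ^m` in the `k`-th coordinate direction. -/
noncomputable def pd {m : ℕ} (k : Fin m) (f : (Fin m → ℝ) → ℝ) (x : Fin m → ℝ) : ℝ :=
  fderiv ℝ f x (Pi.single k 1)

/-- The Jacobian matrix `J(x) = ∂_x y(x)`. -/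
noncomputable def Jac {m n : ℕ} (y : (Fin m → ℝ) → (Fin n → ℝ)) (x : Fin m → ℝ) :
    Matrix (Fin n) (Fin m) ℝ :=
  fun i j => pd j (fun x' => y x' i) x

/-- The velocity-curvature matrix `Ξ_M(x,ẋ) = (1/2) Σ_i ẋ_i ∂_ẋ m_i(x,ẋ)`,
where `m_i` is the `i`-th column of `M`; its `(j,k)` entry is
`(1/2) Σ_i ẋ_i ∂_{ẋ_k} M_{j i}(x,ẋ)`. -/
noncomputable def XiMat {m : ℕ} (M : (Fin m → ℝ) → Matrix (Fin m) (Fin m) ℝ)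
    (v : Fin m → ℝ) : Matrix (Fin m) (Fin m) ℝ :=
  fun j k => (1 / 2) * ∑ i, v i * pd k (fun v' => M v' j i) v

section EntrywiseFDeriv

variable {E E' ι κ : Type*} [NormedAddCommGroup E] [NormedSpace ℝ E]
  [NormedAddCommGroup E'] [NormedSpace ℝ E']

noncomputable def entrywiseFDeriv (F : E → Matrix ι κ ℝ) (w u : E) : Matrix ι κ ℝ :=
  Matrix.of fun a b => fderiv ℝ (fun w' => F w' a b) w u

theorem entrywiseFDeriv_comp {F : E' → Matrix ι κ ℝ} {g : E → E'} {v : E}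
    (hF : ∀ a b, DifferentiableAt ℝ (fun w => F w a b) (g v)) (hg : DifferentiableAt ℝ g v)
    (u : E) :
    entrywiseFDeriv (fun v' => F (g v')) v u = entrywiseFDeriv F (g v) (fderiv ℝ g v u) := by
  ext a b
  exact congrArg (· u) (fderiv_comp v (hF a b) hg)

theorem entrywiseFDeriv_mul_mul {ι' κ' : Type*} [Fintype ι] [Fintype κ]
    (P : Matrix ι' ι ℝ) {F : E → Matrix ι κ ℝ} (Q : Matrix κ κ' ℝ) {w : E}
    (hF : ∀ a b, DifferentiableAt ℝ (fun w' => F w' a b) w) (u : E) :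
    entrywiseFDeriv (fun w' => P * F w' * Q) w u = P * entrywiseFDeriv F w u * Q := by
  ext i j
  have hentry : (fun w' => (P * F w' * Q) i j)
      = fun w' => ∑ b, ∑ a, (P i a * Q b j) * F w' a b := by
    ext w'
    simp only [Matrix.mul_apply, Finset.sum_mul]
    exact Finset.sum_congr rfl fun _ _ => Finset.sum_congr rfl fun _ _ => by ring
  simp only [entrywiseFDeriv, Matrix.of_apply, hentry]
  rw [fderiv_fun_sum fun b _ => DifferentiableAt.fun_sum fun a _ => (hF a b).const_mul _]
  simp only [_root_.sum_apply, Matrix.mul_apply, Matrix.of_apply, Finset.sum_mul]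
  refine Finset.sum_congr rfl fun b _ => ?_
  rw [fderiv_fun_sum fun a _ => (hF a b).const_mul _]
  simp only [_root_.sum_apply, fderiv_const_mul (hF _ b), _root_.smul_apply, smul_eq_mul]
  exact Finset.sum_congr rfl fun _ _ => by ring

end EntrywiseFDeriv

theorem fderiv_mulVec {m n : Type*} [Fintype m] [Fintype n]
    (J : Matrix n m ℝ) (v u : m → ℝ) :
    fderiv ℝ (J *ᵥ ·) v u = J *ᵥ u :=
  congrArg (· u) J.mulVecLin.toContinuousLinearMap.fderiv

theorem XiMat_mulVec {m : ℕ} (M : (Fin m → ℝ) → Matrix (Fin m) (Fin m) ℝ) (v u : Fin m → ℝ) :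
    XiMat M v *ᵥ u = (1 / 2 : ℝ) • (entrywiseFDeriv M v u *ᵥ v) := by
  ext j
  have hdir : ∀ i, fderiv ℝ (fun v' => M v' j i) v u
      = ∑ k, u k * pd k (fun v' => M v' j i) v := by
    intro i
    conv_lhs => rw [pi_eq_sum_univ' u, map_sum]
    simp only [map_smul, smul_eq_mul, pd]
  simp only [XiMat, entrywiseFDeriv, Matrix.mulVec, dotProduct, Matrix.of_apply, hdir,
    Pi.smul_apply, smul_eq_mul, Finset.mul_sum, Finset.sum_mul]
  rw [Finset.sum_comm]
  exact Finset.sum_congr rfl fun _ _ => Finset.sum_congr rfl fun _ _ => by ring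

theorem Xi_pullback_general {m n : ℕ}
    (y : (Fin m → ℝ) → (Fin n → ℝ))
    (N : (Fin n → ℝ) → (Fin n → ℝ) → Matrix (Fin n) (Fin n) ℝ)
    (hN : ∀ i j, Differentiable ℝ fun p : (Fin n → ℝ) × (Fin n → ℝ) => N p.1 p.2 i j)
    (x v : Fin m → ℝ) :
    XiMat (fun v' => (Jac y x)ᵀ * N (y x) ((Jac y x).mulVec v') * Jac y x) v
      = (Jac y x)ᵀ * XiMat (fun w' => N (y x) w') ((Jac y x).mulVec v) * Jac y x := by
  set J := Jac y x
  have hF : ∀ a b, Differentiable ℝ fun w => N (y x) w a b := fun a b =>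
    (hN a b).comp ((differentiable_const _).prodMk differentiable_id)
  have hJ : Differentiable ℝ (J *ᵥ ·) := J.mulVecLin.toContinuousLinearMap.differentiable
  refine Matrix.ext_iff_mulVec.2 fun u => ?_
  rw [XiMat_mulVec, entrywiseFDeriv_mul_mul (F := fun v' => N (y x) (J *ᵥ v')) _ _
      fun a b => ((hF a b).comp hJ).differentiableAt,
    entrywiseFDeriv_comp (fun a b => (hF a b).differentiableAt) hJ.differentiableAt,
    fderiv_mulVec, ← Matrix.mulVec_mulVec, ← Matrix.mulVec_mulVec, ← Matrix.mulVec_mulVec,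
    ← Matrix.mulVec_mulVec, XiMat_mulVec, Matrix.mulVec_smul]

/-- Pullback of the velocity-curvature term: if
`M(x,ẋ) = J(x)ᵀ N(y(x), J(x)ẋ) J(x)`, then `Ξ_M(x,ẋ) = J(x)ᵀ Ξ_N(y(x), J(x)ẋ) J(x)`. -/
theorem Xi_pullback {m n : ℕ}
    (y : (Fin m → ℝ) → (Fin n → ℝ))
    (N : (Fin n → ℝ) → (Fin n → ℝ) → Matrix (Fin n) (Fin n) ℝ)
    (hy : ∀ i, Differentiable ℝ fun x => y x i)
    (hN : ∀ i j, Differentiable ℝ fun p : (Fin n → ℝ) × (Fin n → ℝ) => N p.1 p.2 i j)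
    (x v : Fin m → ℝ) :
    XiMat (fun v' => (Jac y x)ᵀ * N (y x) ((Jac y x).mulVec v') * Jac y x) v
      = (Jac y x)ᵀ * XiMat (fun w' => N (y x) w') ((Jac y x).mulVec v) * Jac y x :=
  Xi_pullback_general y N hN x v
end

section
/- Let M_i ∈ ℝ^{n_i × n_i} be symmetric positive definite, J_i ∈ ℝ^{n_i × m}, a_i ∈ ℝ^{n_i}, and c_i ∈ ℝ^{n_i} for i = 1,…,K, and suppose M = Σ_i J_iᵀ M_i J_i is invertible. Then the unique minimizer over a' ∈ ℝ^m of (1/2) Σ_{i=1}^K ‖J_i a' + c_i − a_i‖²_{M_i} is a = M⁻¹ f, where f = Σ_{i=1}^K J_iᵀ M_i (a_i − c_i) and ‖v‖²_{M_i} = vᵀ M_i v. -/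
/-!
Expanding each residual `J_i b + (c_i - a_i)` shows that the objective equals
`½ bᵀ M b - bᵀ f` up to a constant, with `M = Σ_i J_iᵀ M_i J_i` positive semidefinite as a sum of
congruences of the `M_i`, hence positive definite once invertible. Completing the square around
the solution `x` of `M x = f` gives `½ (b - x)ᵀ M (b - x)` as the excess over the minimum, which
vanishes only at `b = x`.
-/

open Matrix

namespace Matrix

variable {l m : Type*} [Fintype l] [Fintype m]

theorem IsSymm.dotProduct_mulVec_comm {R : Type*} [CommSemiring R] {A : Matrix l l R}
    (hA : A.IsSymm) (u v : l → R) : u ⬝ᵥ A *ᵥ v = v ⬝ᵥ A *ᵥ u := by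
  simpa only [hA.eq] using dotProduct_transpose_mulVec A u v

theorem IsSymm.mulVec_add_dotProduct_mulVec_mulVec_add {R : Type*} [CommRing R]
    {A : Matrix l l R} (hA : A.IsSymm) (B : Matrix l m R) (x : m → R) (r : l → R) :
    (B *ᵥ x + r) ⬝ᵥ A *ᵥ (B *ᵥ x + r)
      = x ⬝ᵥ (Bᵀ * A * B) *ᵥ x + 2 * (x ⬝ᵥ Bᵀ *ᵥ A *ᵥ r) + r ⬝ᵥ A *ᵥ r := by
  have hmove : ∀ w, B *ᵥ x ⬝ᵥ w = x ⬝ᵥ Bᵀ *ᵥ w := fun w => by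
    rw [dotProduct_comm, dotProduct_transpose_mulVec]
  rw [mulVec_add, add_dotProduct, dotProduct_add, dotProduct_add, hA.dotProduct_mulVec_comm r,
    hmove, hmove, ← mulVec_mulVec, ← mulVec_mulVec]
  ring

theorem IsSymm.quadratic_eq_add_quadForm_sub {Q : Matrix m m ℝ} (hQ : Q.IsSymm) {f x : m → ℝ}
    (hx : Q *ᵥ x = f) (b : m → ℝ) :
    1 / 2 * (b ⬝ᵥ Q *ᵥ b) - b ⬝ᵥ f
      = 1 / 2 * (x ⬝ᵥ Q *ᵥ x) - x ⬝ᵥ f + 1 / 2 * ((b - x) ⬝ᵥ Q *ᵥ (b - x)) := by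
  subst hx
  simp only [mulVec_sub, sub_dotProduct, dotProduct_sub, hQ.dotProduct_mulVec_comm x b]
  ring

theorem PosDef.quadratic_isMinimizer {Q : Matrix m m ℝ} (hQ : Q.PosDef) {f x : m → ℝ}
    (hx : Q *ᵥ x = f) :
    (∀ b, 1 / 2 * (x ⬝ᵥ Q *ᵥ x) - x ⬝ᵥ f ≤ 1 / 2 * (b ⬝ᵥ Q *ᵥ b) - b ⬝ᵥ f) ∧
    ∀ b, 1 / 2 * (b ⬝ᵥ Q *ᵥ b) - b ⬝ᵥ f = 1 / 2 * (x ⬝ᵥ Q *ᵥ x) - x ⬝ᵥ f → b = x := by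
  have hsymm : Q.IsSymm := isHermitian_iff_isSymm.mp hQ.isHermitian
  refine ⟨fun b => ?_, fun b hb => ?_⟩
  · have hnonneg : 0 ≤ (b - x) ⬝ᵥ Q *ᵥ (b - x) := by
      simpa using hQ.posSemidef.dotProduct_mulVec_nonneg (b - x)
    linarith [hsymm.quadratic_eq_add_quadForm_sub hx b]
  · have hzero : (b - x) ⬝ᵥ Q *ᵥ (b - x) = 0 := by
      linarith [hsymm.quadratic_eq_add_quadForm_sub hx b]
    by_contra hne
    have hpos := hQ.dotProduct_mulVec_pos (sub_ne_zero.mpr hne)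
    simp only [star_trivial, hzero, lt_self_iff_false] at hpos

variable {ι : Type*} [Fintype ι] {n : ι → Type*} [∀ i, Fintype (n i)]

theorem posDef_sum_transpose_mul_mul_self [DecidableEq m] (J : ∀ i, Matrix (n i) m ℝ)
    (M : ∀ i, Matrix (n i) (n i) ℝ) (hM : ∀ i, (M i).PosSemidef)
    (hdet : IsUnit (∑ i, (J i)ᵀ * M i * J i).det) :
    (∑ i, (J i)ᵀ * M i * J i).PosDef := by
  have hsemidef : (∑ i, (J i)ᵀ * M i * J i).PosSemidef :=
    posSemidef_sum _ fun i _ => by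
      simpa only [conjTranspose_eq_transpose_of_trivial] using
        (hM i).conjTranspose_mul_mul_same (J i)
  exact hsemidef.posDef_iff_isUnit.mpr ((isUnit_iff_isUnit_det _).mpr hdet)

theorem sum_residual_dotProduct_mulVec_residual (J : ∀ i, Matrix (n i) m ℝ)
    (M : ∀ i, Matrix (n i) (n i) ℝ) (hM : ∀ i, (M i).IsSymm) (a c : ∀ i, n i → ℝ)
    (b : m → ℝ) :
    1 / 2 * ∑ i, (J i *ᵥ b + c i - a i) ⬝ᵥ M i *ᵥ (J i *ᵥ b + c i - a i)
      = 1 / 2 * (b ⬝ᵥ (∑ i, (J i)ᵀ * M i * J i) *ᵥ b)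
          - b ⬝ᵥ ∑ i, (J i)ᵀ *ᵥ M i *ᵥ (a i - c i)
        + 1 / 2 * ∑ i, (c i - a i) ⬝ᵥ M i *ᵥ (c i - a i) := by
  have hterm : ∀ i, (J i *ᵥ b + c i - a i) ⬝ᵥ M i *ᵥ (J i *ᵥ b + c i - a i)
      = b ⬝ᵥ ((J i)ᵀ * M i * J i) *ᵥ b - 2 * (b ⬝ᵥ (J i)ᵀ *ᵥ M i *ᵥ (a i - c i))
        + (c i - a i) ⬝ᵥ M i *ᵥ (c i - a i) := fun i => by
    rw [add_sub_assoc, (hM i).mulVec_add_dotProduct_mulVec_mulVec_add, ← neg_sub (a i),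
      mulVec_neg, mulVec_neg, dotProduct_neg]
    ring
  simp only [hterm, Finset.sum_add_distrib, Finset.sum_sub_distrib, ← Finset.mul_sum,
    sum_mulVec, dotProduct_sum]
  ring

end Matrix

/-- Least-squares characterization of the RMPflow pullback: with `M_i ≻ 0`,
`M = Σ_i J_iᵀ M_i J_i` invertible and `f = Σ_i J_iᵀ M_i (a_i − c_i)`, the unique
minimizer of `a' ↦ (1/2) Σ_i ‖J_i a' + c_i − a_i‖²_{M_i}` is `a = M⁻¹ f`. -/
theorem pullback_least_squares {K m : ℕ} (n : Fin K → ℕ)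
    (J : ∀ i : Fin K, Matrix (Fin (n i)) (Fin m) ℝ)
    (M : ∀ i : Fin K, Matrix (Fin (n i)) (Fin (n i)) ℝ)
    (a : ∀ i : Fin K, Fin (n i) → ℝ) (c : ∀ i : Fin K, Fin (n i) → ℝ)
    (hM : ∀ i, (M i).PosDef)
    (hMtot : IsUnit (∑ i, (J i)ᵀ * M i * J i).det) :
    let Mtot := ∑ i, (J i)ᵀ * M i * J i
    let f := ∑ i, (J i)ᵀ.mulVec ((M i).mulVec (a i - c i))
    let F : (Fin m → ℝ) → ℝ := fun b =>
      (1 / 2) * ∑ i, ((J i).mulVec b + c i - a i) ⬝ᵥ (M i).mulVec ((J i).mulVec b + c i - a i)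
    (∀ b, F (Mtot⁻¹.mulVec f) ≤ F b) ∧
    (∀ b, F b = F (Mtot⁻¹.mulVec f) → b = Mtot⁻¹.mulVec f) := by
  intro Mtot f F
  have hF : ∀ b, F b = 1 / 2 * (b ⬝ᵥ Mtot *ᵥ b) - b ⬝ᵥ f
      + 1 / 2 * ∑ i, (c i - a i) ⬝ᵥ M i *ᵥ (c i - a i) := fun b =>
    sum_residual_dotProduct_mulVec_residual J M
      (fun i => isHermitian_iff_isSymm.mp (hM i).isHermitian) a c b
  have hsolve : Mtot *ᵥ (Mtot⁻¹ *ᵥ f) = f := by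
    rw [mulVec_mulVec, mul_nonsing_inv _ hMtot, one_mulVec]
  have hposDef : Mtot.PosDef :=
    posDef_sum_transpose_mul_mul_self J M (fun i => (hM i).posSemidef) hMtot
  obtain ⟨hmin, hunique⟩ := hposDef.quadratic_isMinimizer hsolve
  simp only [hF]
  exact ⟨fun b => by linarith [hmin b], fun b hb => hunique b (by linarith)⟩
end

section
/- Let w : ℝ^n → ℝ be differentiable with w > 0 and consider the isotropic metric M(x) = w(x)I. The curvature term ξ_M(x,ẋ) = (ẋᵀ∇w(x))ẋ − (1/2)‖ẋ‖²∇w(x) satisfies −M(x)⁻¹ ξ_M(x,ẋ) = (1/2)‖ẋ‖² (I − 2 v̂v̂ᵀ) ∇log w(x) for ẋ ≠ 0, where v̂ = ẋ/‖ẋ‖; that is, the curvature acceleration is (1/2)‖ẋ‖² times the Householder reflection of ∇log w across the hyperplane normal to ẋ. -/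
open scoped RealInnerProductSpace

/-! Since `∇ log w = w⁻¹ ∇w` and `(1/2)‖v‖² · 2 v̂v̂ᵀ = vvᵀ`, both sides equal
`w⁻¹ ((1/2)‖v‖² ∇w − ⟪v, ∇w⟫ v)`. -/

theorem HasGradientAt.log {F : Type*} [NormedAddCommGroup F] [InnerProductSpace ℝ F]
    [CompleteSpace F] {f : F → ℝ} {f' x : F} (hf : HasGradientAt f f' x) (hx : f x ≠ 0) :
    HasGradientAt (fun z => Real.log (f z)) ((f x)⁻¹ • f') x := by
  rw [hasGradientAt_iff_hasFDerivAt] at hf ⊢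
  simpa using hf.log hx

theorem half_sq_norm_smul_householder_eq {E : Type*} [NormedAddCommGroup E]
    [InnerProductSpace ℝ E] {v : E} (hv : v ≠ 0) (g : E) :
    ((1 / 2) * ‖v‖ ^ 2) • (g - (2 * ⟪‖v‖⁻¹ • v, g⟫) • (‖v‖⁻¹ • v))
      = ((1 / 2) * ‖v‖ ^ 2) • g - ⟪v, g⟫ • v := by
  have hv' : ‖v‖ ≠ 0 := norm_ne_zero_iff.mpr hv
  rw [real_inner_smul_left]
  match_scalars <;> field_simp

/-- Curvature acceleration of the isotropic metric `M(x) = w(x)I`: with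
`ξ_M(x,ẋ) = (ẋᵀ∇w)ẋ − (1/2)‖ẋ‖²∇w`, one has
`−M(x)⁻¹ ξ_M(x,ẋ) = (1/2)‖ẋ‖² (I − 2v̂v̂ᵀ) ∇log w(x)`, the Householder reflection of
`∇log w` across the hyperplane normal to `ẋ`, scaled by `(1/2)‖ẋ‖²`. -/
theorem isotropic_curvature_householder {n : ℕ}
    (w : EuclideanSpace ℝ (Fin n) → ℝ)
    (x v : EuclideanSpace ℝ (Fin n))
    (hw : DifferentiableAt ℝ w x)
    (hwpos : 0 < w x)
    (hv : v ≠ 0) :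
    -((w x)⁻¹ • (⟪v, gradient w x⟫ • v - ((1 / 2) * ‖v‖ ^ 2) • gradient w x))
      = ((1 / 2) * ‖v‖ ^ 2) •
          (gradient (fun z => Real.log (w z)) x
            - (2 * ⟪‖v‖⁻¹ • v, gradient (fun z => Real.log (w z)) x⟫) • (‖v‖⁻¹ • v)) := by
  rw [(hw.hasGradientAt.log hwpos.ne').gradient, half_sq_norm_smul_householder_eq hv,
    inner_smul_right]
  module
end
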